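/- arXiv:1105.4544 — 2 statements merged into one kernel-verified Lean document; each statement's English description precedes it below -/
import Mathlib

section
/- Let $A$ and $B$ be finite abelian $p$-groups (written additively), with maps $N : B \to A$ and $\iota : A \to B$ that are $\mathbb{Z}_p$-linear (i.e. group homomorphisms), such that: (1) $N$ is surjective and every element of $A \setminus pA$ has order at least $p^2$; (2) the $p$-ranks of $A$ and $B$ are both equal to $r$ and $|B|/|A| = p^r$; (3) $N(\iota(a)) = pa$ for all $a \in A$. Then $\iota$ preserves $p$-rank, i.e. $\mathrm{rank}_p(\iota(A)) = \mathrm{rank}_p(A)$. -/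
/-- The multiplication-by-`p` homomorphism on an additive commutative group;
its range is `pA` and its kernel is the socle `A[p]`. -/
def pMulHom (p : ℕ) (A : Type*) [AddCommGroup A] : A →+ A where
  toFun a := p • a
  map_zero' := by simp
  map_add' a b := by simp [smul_add]

/-- If `N : B → A` is surjective, every element of `A \ pA` has order
at least `p^2`, `A` and `B` have `p`-rank `r` (i.e. `|X/pX| = p^r`), `|B| = |A|·p^r`
and `N ∘ ι = p`, then `ι` preserves the `p`-rank: `rank_p(ι(A)) = rank_p(A)`. -/
theorem stmt0 (p r : ℕ) (hp : p.Prime)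
    (A B : Type*) [AddCommGroup A] [AddCommGroup B] [Finite A] [Finite B]
    (hApgrp : ∃ n, Nat.card A = p ^ n) (hBpgrp : ∃ n, Nat.card B = p ^ n)
    (N : B →+ A) (ι : A →+ B)
    (hNsurj : Function.Surjective N)
    (hsexp : ∀ a : A, a ∉ (pMulHom p A).range → p ^ 2 ≤ addOrderOf a)
    (hrkA : Nat.card (A ⧸ (pMulHom p A).range) = p ^ r)
    (hrkB : Nat.card (B ⧸ (pMulHom p B).range) = p ^ r)
    (hcard : Nat.card B = Nat.card A * p ^ r)
    (hNι : ∀ a : A, N (ι a) = p • a) :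
    Nat.card (↥ι.range ⧸ (pMulHom p ↥ι.range).range) =
      Nat.card (A ⧸ (pMulHom p A).range) := by
  classical
  -- Elements killed by p lie in pA.
  have hsocle : ∀ a : A, p • a = 0 → a ∈ (pMulHom p A).range := by
    intro a ha
    by_contra h
    have h2 := hsexp a h
    have hdvd : addOrderOf a ∣ p := addOrderOf_dvd_of_nsmul_eq_zero ha
    have hle : addOrderOf a ≤ p := Nat.le_of_dvd hp.pos hdvd
    have hlt : p ^ 2 ≤ p := le_trans h2 hle
    nlinarith [hp.two_le]
  -- The kernel of ι lies in pA.
  have hkerι : ∀ a : A, ι a = 0 → a ∈ (pMulHom p A).range := by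
    intro a ha
    apply hsocle
    rw [← hNι a, ha, map_zero]
  set φ : A →+ ↥ι.range ⧸ (pMulHom p ↥ι.range).range :=
    (QuotientAddGroup.mk' _).comp ι.rangeRestrict with hφ
  have hφsurj : Function.Surjective φ :=
    (QuotientAddGroup.mk'_surjective _).comp ι.rangeRestrict_surjective
  have hkerφ : φ.ker = (pMulHom p A).range := by
    ext a
    simp only [AddMonoidHom.mem_ker, hφ, AddMonoidHom.comp_apply,
      QuotientAddGroup.mk'_apply, QuotientAddGroup.eq_zero_iff,
      AddMonoidHom.mem_range]
    constructor
    · rintro ⟨x, hx⟩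
      obtain ⟨c, hc⟩ := x.2
      have hx1 : p • x.1 = ι a := congrArg Subtype.val hx
      have : ι (a - p • c) = 0 := by
        rw [map_sub, map_nsmul, hc, hx1, sub_self]
      obtain ⟨d, hd⟩ := hkerι _ this
      have hd' : p • d = a - p • c := hd
      refine ⟨d + c, ?_⟩
      show p • (d + c) = a
      rw [smul_add, hd']
      abel
    · rintro ⟨c, rfl⟩
      refine ⟨ι.rangeRestrict c, ?_⟩
      show p • ι.rangeRestrict c = ι.rangeRestrict (p • c)
      rw [map_nsmul]
  have e := QuotientAddGroup.quotientKerEquivOfSurjective φ hφsurj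
  rw [← Nat.card_congr e.toEquiv, hkerφ]
end

section
/- Let $A$ and $B$ be finite abelian $p$-groups, with homomorphisms $N : B \to A$ and $\iota : A \to B$ such that $N$ is surjective, every element of $A \setminus pA$ has order greater than $p$, the $p$-ranks of $A$ and $B$ are both equal to $r$, $|B|/|A| = p^r$, and $N(\iota(a)) = pa$ for all $a \in A$. Then $\iota(A) \subseteq pB$. -/
/-
The reduction `B/pB → A/pA` of `N` is a surjection between groups of the same order `p ^ r`,
hence injective. Since `N ∘ ι = p`, the reduction of `N` kills the image of
every `ι a` in `B/pB`, so that image is zero, i.e. `ι a ∈ pB`.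
-/

open Function QuotientAddGroup

section ModP

variable (p : ℕ) {A B : Type*} [AddCommGroup A] [AddCommGroup B]

lemma pMulHom_range_le_comap (N : B →+ A) :
    (pMulHom p B).range ≤ (pMulHom p A).range.comap N := by
  rintro _ ⟨b, rfl⟩
  exact ⟨N b, (N.map_nsmul p b).symm⟩

def modPMap (N : B →+ A) : B ⧸ (pMulHom p B).range →+ A ⧸ (pMulHom p A).range :=
  QuotientAddGroup.map _ _ N (pMulHom_range_le_comap p N)

variable {p}

lemma modPMap_mk (N : B →+ A) (b : B) :
    modPMap p N (b : B ⧸ (pMulHom p B).range) = (N b : A ⧸ (pMulHom p A).range) :=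
  rfl

lemma modPMap_surjective {N : B →+ A} (hN : Surjective N) : Surjective (modPMap p N) := by
  intro x
  obtain ⟨a, rfl⟩ := mk_surjective x
  obtain ⟨b, rfl⟩ := hN a
  exact ⟨b, rfl⟩

lemma modPMap_injective [Finite B] {N : B →+ A} (hN : Surjective N)
    (hcard : Nat.card (B ⧸ (pMulHom p B).range) = Nat.card (A ⧸ (pMulHom p A).range)) :
    Injective (modPMap p N) :=
  ((Nat.bijective_iff_surjective_and_card _).mpr ⟨modPMap_surjective hN, hcard⟩).1

lemma range_le_pMulHom_range_of_modPMap_injective {N : B →+ A} {ι : A →+ B}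
    (hinj : Injective (modPMap p N)) (hNι : ∀ a : A, N (ι a) = p • a) :
    ι.range ≤ (pMulHom p B).range := by
  rintro _ ⟨a, rfl⟩
  have hkill : modPMap p N (ι a : B ⧸ (pMulHom p B).range) = 0 := by
    rw [modPMap_mk, hNι, eq_zero_iff]
    exact ⟨a, rfl⟩
  rw [← map_zero (modPMap p N)] at hkill
  exact (eq_zero_iff _).mp (hinj hkill)

end ModP

theorem stmt1_general (p r : ℕ)
    (A B : Type*) [AddCommGroup A] [AddCommGroup B] [Finite B]
    (N : B →+ A) (ι : A →+ B)
    (hNsurj : Function.Surjective N)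
    (hrkA : Nat.card (A ⧸ (pMulHom p A).range) = p ^ r)
    (hrkB : Nat.card (B ⧸ (pMulHom p B).range) = p ^ r)
    (hNι : ∀ a : A, N (ι a) = p • a) :
    ι.range ≤ (pMulHom p B).range :=
  range_le_pMulHom_range_of_modPMap_injective
    (modPMap_injective hNsurj (hrkB.trans hrkA.symm)) hNι

/-- under the hypotheses of Lemma `ab` (N surjective, subexponent of A
greater than p, equal p-ranks r, |B|/|A| = p^r, N∘ι = p), one has `ι(A) ⊆ pB`. -/
theorem stmt1 (p r : ℕ) (hp : p.Prime)
    (A B : Type*) [AddCommGroup A] [AddCommGroup B] [Finite A] [Finite B]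
    (hApgrp : ∃ n, Nat.card A = p ^ n) (hBpgrp : ∃ n, Nat.card B = p ^ n)
    (N : B →+ A) (ι : A →+ B)
    (hNsurj : Function.Surjective N)
    (hsexp : ∀ a : A, a ∉ (pMulHom p A).range → p < addOrderOf a)
    (hrkA : Nat.card (A ⧸ (pMulHom p A).range) = p ^ r)
    (hrkB : Nat.card (B ⧸ (pMulHom p B).range) = p ^ r)
    (hcard : Nat.card B = Nat.card A * p ^ r)
    (hNι : ∀ a : A, N (ι a) = p • a) :
    ι.range ≤ (pMulHom p B).range :=
  stmt1_general p r A B N ι hNsurj hrkA hrkB hNι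
end
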